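/- Let k be a positive integer, α and β finite types, G a simple graph on α with labeling lab_G : α → Fin k, H a simple graph on β with labeling lab_H : β → Fin k, and M ⊆ Fin k × Fin k. Let F be the M-product of (G, lab_G) and (H, lab_H), labeled by lab_G on inl-vertices and lab_H on inr-vertices. Then for every I ⊆ Fin k and every T ⊆ α ⊕ β: T is a vertex cover of F with full_F(T) = I if and only if T_G = {a : inl a ∈ T} is a vertex cover of G, T_H = {b : inr b ∈ T} is a vertex cover of H, and the pair (full_G(T_G), full_H(T_H)) is a split of I with respect to M. -/

import Mathlib

/-- A vertex cover of a simple graph: a set of vertices containing at least one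
endpoint of every edge. -/
def IsVertexCover {V : Type*} (G : SimpleGraph V) (C : Finset V) : Prop :=
  ∀ ⦃u v : V⦄, G.Adj u v → u ∈ C ∨ v ∈ C

/-- The `M`-product of the `k`-labeled graphs `(G, labG)` and `(H, labH)`: the graph on
`α ⊕ β` in which `inl u, inl v` are adjacent iff `u, v` are adjacent in `G`,
`inr u, inr v` are adjacent iff `u, v` are adjacent in `H`, and `inl u, inr v` are
adjacent iff `(labG u, labH v) ∈ M`. -/
def MProduct {k : ℕ} {α β : Type*} (G : SimpleGraph α) (H : SimpleGraph β)
    (labG : α → Fin k) (labH : β → Fin k) (M : Set (Fin k × Fin k)) :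
    SimpleGraph (α ⊕ β) where
  Adj x y :=
    match x, y with
    | Sum.inl u, Sum.inl v => G.Adj u v
    | Sum.inr u, Sum.inr v => H.Adj u v
    | Sum.inl u, Sum.inr v => (labG u, labH v) ∈ M
    | Sum.inr u, Sum.inl v => (labG v, labH u) ∈ M
  symm := by
    refine ⟨?_⟩
    rintro (u | u) (v | v) h
    · exact G.adj_symm h
    · exact h
    · exact h
    · exact H.adj_symm h
  loopless := by
    refine ⟨?_⟩
    rintro (u | u) h
    · exact G.loopless.irrefl u h
    · exact H.loopless.irrefl u h

/-- The left part `T_G = {a : inl a ∈ T}` of a set of vertices of a sum type. -/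
def leftPart {α β : Type*} [Fintype α] [DecidableEq α] [DecidableEq β]
    (T : Finset (α ⊕ β)) : Finset α :=
  Finset.univ.filter (fun a => Sum.inl a ∈ T)

/-- The right part `T_H = {b : inr b ∈ T}` of a set of vertices of a sum type. -/
def rightPart {α β : Type*} [Fintype β] [DecidableEq α] [DecidableEq β]
    (T : Finset (α ⊕ β)) : Finset β :=
  Finset.univ.filter (fun b => Sum.inr b ∈ T)

/-- The preimage `lab⁻¹(i)` of a label `i` under a labeling. -/
def labelClass {k : ℕ} {γ : Type*} [Fintype γ] (lab : γ → Fin k) (i : Fin k) :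
    Finset γ :=
  Finset.univ.filter (fun v => lab v = i)

/-- `full(X) = {i : lab⁻¹(i) ⊆ X}` for a `k`-labeled graph with labeling `lab`. -/
def fullSet {k : ℕ} {γ : Type*} [Fintype γ] [DecidableEq γ] (lab : γ → Fin k)
    (X : Finset γ) : Finset (Fin k) :=
  Finset.univ.filter (fun i => labelClass lab i ⊆ X)

/-- `(IG, IH)` is a split of `I` with respect to `M` if `IG ∩ IH = I` and for every
`(i, j) ∈ M`, `i ∈ IG` or `j ∈ IH`. -/
def IsSplit {k : ℕ} (I IG IH : Finset (Fin k)) (M : Set (Fin k × Fin k)) : Prop :=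
  IG ∩ IH = I ∧ ∀ p ∈ M, p.1 ∈ IG ∨ p.2 ∈ IH

private lemma mem_fullSet {k : ℕ} {γ : Type*} [Fintype γ] [DecidableEq γ]
    (lab : γ → Fin k) (X : Finset γ) (i : Fin k) :
    i ∈ fullSet lab X ↔ ∀ v, lab v = i → v ∈ X := by
  simp [fullSet, labelClass, Finset.subset_iff]

private lemma mem_leftPart {α β : Type*} [Fintype α] [DecidableEq α] [DecidableEq β]
    (T : Finset (α ⊕ β)) (a : α) : a ∈ leftPart T ↔ Sum.inl a ∈ T := by
  simp [leftPart]

private lemma mem_rightPart {α β : Type*} [Fintype β] [DecidableEq α] [DecidableEq β]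
    (T : Finset (α ⊕ β)) (b : β) : b ∈ rightPart T ↔ Sum.inr b ∈ T := by
  simp [rightPart]


/-- For the `M`-product `F` of `(G, labG)` and `(H, labH)`, labeled by
`Sum.elim labG labH`: a set `T` is a vertex cover of `F` with `full_F(T) = I` iff its
left part `T_G` is a vertex cover of `G`, its right part `T_H` is a vertex cover of
`H`, and `(full_G(T_G), full_H(T_H))` is a split of `I` with respect to `M`. -/
theorem stmt14 (k : ℕ) (hk : 0 < k) {α β : Type*}
    [Fintype α] [Fintype β] [DecidableEq α] [DecidableEq β]
    (G : SimpleGraph α) (H : SimpleGraph β)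
    (labG : α → Fin k) (labH : β → Fin k) (M : Set (Fin k × Fin k))
    (I : Finset (Fin k)) (T : Finset (α ⊕ β)) :
    (IsVertexCover (MProduct G H labG labH M) T ∧
        fullSet (Sum.elim labG labH) T = I) ↔
      (IsVertexCover G (leftPart T) ∧ IsVertexCover H (rightPart T) ∧
        IsSplit I (fullSet labG (leftPart T)) (fullSet labH (rightPart T)) M) := by
  have key : ∀ i : Fin k, i ∈ fullSet (Sum.elim labG labH) T ↔
      (i ∈ fullSet labG (leftPart T) ∧ i ∈ fullSet labH (rightPart T)) := by
    intro i
    simp only [mem_fullSet, mem_leftPart, mem_rightPart, Sum.forall, Sum.elim_inl,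
      Sum.elim_inr]
  constructor
  · rintro ⟨hc, hI⟩
    refine ⟨?_, ?_, ?_, ?_⟩
    · intro u v h
      have := hc (show (MProduct G H labG labH M).Adj (Sum.inl u) (Sum.inl v) from h)
      rw [mem_leftPart, mem_leftPart]
      rcases this with h' | h' <;> [exact Or.inl h'; exact Or.inr h']
    · intro u v h
      have := hc (show (MProduct G H labG labH M).Adj (Sum.inr u) (Sum.inr v) from h)
      rw [mem_rightPart, mem_rightPart]
      rcases this with h' | h' <;> [exact Or.inl h'; exact Or.inr h']
    · subst hI
      ext i
      rw [Finset.mem_inter]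
      exact (key i).symm
    · intro p hp
      by_contra hcon
      push_neg at hcon
      obtain ⟨h1, h2⟩ := hcon
      rw [mem_fullSet] at h1 h2
      push_neg at h1 h2
      obtain ⟨u, hu, hu2⟩ := h1
      obtain ⟨v, hv, hv2⟩ := h2
      rw [mem_leftPart] at hu2
      rw [mem_rightPart] at hv2
      have hadj : (MProduct G H labG labH M).Adj (Sum.inl u) (Sum.inr v) := by
        show (labG u, labH v) ∈ M
        rw [hu, hv]
        exact hp
      rcases hc hadj with h | h
      · exact hu2 h
      · exact hv2 h
  · rintro ⟨hG, hH, hinter, hsplit⟩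
    constructor
    · rintro (u | u) (v | v) h
      · rcases hG h with h' | h' <;> rw [mem_leftPart] at h' <;>
          [exact Or.inl h'; exact Or.inr h']
      · rcases hsplit (labG u, labH v) h with h' | h' <;> rw [mem_fullSet] at h'
        · exact Or.inl ((mem_leftPart T u).mp (h' u rfl))
        · exact Or.inr ((mem_rightPart T v).mp (h' v rfl))
      · rcases hsplit (labG v, labH u) h with h' | h' <;> rw [mem_fullSet] at h'
        · exact Or.inr ((mem_leftPart T v).mp (h' v rfl))
        · exact Or.inl ((mem_rightPart T u).mp (h' u rfl))
      · rcases hH h with h' | h' <;> rw [mem_rightPart] at h' <;>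
          [exact Or.inl h'; exact Or.inr h']
    · rw [← hinter]
      ext i
      rw [Finset.mem_inter]
      exact key i
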